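/- For the pairwise exponential loss over all correctly ordered pairs, if every pair of documents with distinct relevance labels is separated by a partition (i.e., no two documents appearing in a common loss term lie in the same part), then the loss is derivative additive on that partition: the first and second derivatives of the loss in each leaf's output at 0 equal the sums of the corresponding per-document derivatives over that leaf. -/

import Mathlib

/-!
Over the correctly ordered pairs `(d₁, d₂)`, the loss with offset `o` on a leaf `S` is
`∑ exp (f d₂ - f d₁ + o * c_S (d₁, d₂))` with `c_S (d₁, d₂) = 1[d₂ ∈ S] - 1[d₁ ∈ S]`
(`offsetCoeff`), so its first and second derivatives at `0` are `∑ c_S · w` and `∑ c_S² · w`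
with `w = exp (f d₂ - f d₁)`. The coefficient `c_S` is additive in `S`, hence so is the first
derivative, whatever `S` is. Since `d₁ ≠ d₂`, the square `c_S²` equals `1[d₂ ∈ S] + 1[d₁ ∈ S]`,
and is therefore additive in `S`, as soon as `S` does not contain both documents of the pair,
which is what separation guarantees.
-/

open Real Finset

section SumMulExp

variable {ι : Type*} (s : Finset ι) (a b c : ι → ℝ)

theorem hasDerivAt_sum_mul_exp (x : ℝ) :
    HasDerivAt (fun o => ∑ i ∈ s, a i * exp (b i + o * c i))
      (∑ i ∈ s, a i * c i * exp (b i + x * c i)) x := by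
  refine HasDerivAt.fun_sum fun i _ => ?_
  have hlin : HasDerivAt (fun o => b i + o * c i) (c i) x := by
    simpa using ((hasDerivAt_id x).mul_const (c i)).const_add (b i)
  exact (hlin.exp.const_mul (a i)).congr_deriv (by ring)

theorem deriv_sum_mul_exp :
    deriv (fun o => ∑ i ∈ s, a i * exp (b i + o * c i)) =
      fun x => ∑ i ∈ s, a i * c i * exp (b i + x * c i) :=
  funext fun x => (hasDerivAt_sum_mul_exp s a b c x).deriv

theorem deriv_sum_exp :
    deriv (fun o => ∑ i ∈ s, exp (b i + o * c i)) =
      fun x => ∑ i ∈ s, c i * exp (b i + x * c i) := by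
  simpa using deriv_sum_mul_exp s 1 b c

theorem deriv_sum_exp_zero :
    deriv (fun o => ∑ i ∈ s, exp (b i + o * c i)) 0 = ∑ i ∈ s, c i * exp (b i) := by
  simp [deriv_sum_exp]

theorem deriv_deriv_sum_exp_zero :
    deriv (deriv (fun o => ∑ i ∈ s, exp (b i + o * c i))) 0 = ∑ i ∈ s, c i ^ 2 * exp (b i) := by
  simp [deriv_sum_exp, deriv_sum_mul_exp, sq]

end SumMulExp

section PairwiseExpLoss

variable {α : Type*} [DecidableEq α]

def orderedPairs (D : Finset α) (y : α → ℤ) : Finset (α × α) :=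
  (D ×ˢ D).filter fun p => y p.2 < y p.1

def offsetCoeff (S : Finset α) (p : α × α) : ℝ :=
  (if p.2 ∈ S then 1 else 0) - (if p.1 ∈ S then 1 else 0)

noncomputable def pairwiseExpLoss (D : Finset α) (f : α → ℝ) (y : α → ℤ) (S : Finset α)
    (o : ℝ) : ℝ :=
  ∑ p ∈ orderedPairs D y, exp (f p.2 - f p.1 + o * offsetCoeff S p)

theorem sum_offsetCoeff_singleton (S : Finset α) (p : α × α) :
    ∑ d ∈ S, offsetCoeff {d} p = offsetCoeff S p := by
  simp [offsetCoeff, sum_sub_distrib]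

theorem offsetCoeff_sq_of_not_mem_both {S : Finset α} {p : α × α} (h : ¬(p.1 ∈ S ∧ p.2 ∈ S)) :
    offsetCoeff S p ^ 2 = (if p.2 ∈ S then 1 else 0) + (if p.1 ∈ S then 1 else 0) := by
  unfold offsetCoeff
  split_ifs <;> simp_all

theorem sum_sq_offsetCoeff_singleton {S : Finset α} {p : α × α} (hne : p.1 ≠ p.2)
    (hS : ¬(p.1 ∈ S ∧ p.2 ∈ S)) :
    ∑ d ∈ S, offsetCoeff {d} p ^ 2 = offsetCoeff S p ^ 2 := by
  have hsingle (d : α) : ¬(p.1 ∈ ({d} : Finset α) ∧ p.2 ∈ ({d} : Finset α)) := by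
    rintro ⟨h₁, h₂⟩
    exact hne ((mem_singleton.1 h₁).trans (mem_singleton.1 h₂).symm)
  simp [offsetCoeff_sq_of_not_mem_both (hsingle _), offsetCoeff_sq_of_not_mem_both hS,
    sum_add_distrib]

variable (D : Finset α) (f : α → ℝ) (y : α → ℤ)

theorem sum_sum_ite_exp_eq_pairwiseExpLoss (S : Finset α) (o : ℝ) :
    (∑ d₁ ∈ D, ∑ d₂ ∈ D, if y d₁ > y d₂ then
        exp ((f d₂ + o * (if d₂ ∈ S then 1 else 0))
          - (f d₁ + o * (if d₁ ∈ S then 1 else 0))) else 0) =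
      pairwiseExpLoss D f y S o := by
  rw [pairwiseExpLoss, orderedPairs, sum_filter, sum_product]
  refine sum_congr rfl fun d₁ _ => sum_congr rfl fun d₂ _ => ?_
  congr 2
  simp only [offsetCoeff]
  ring

theorem deriv_pairwiseExpLoss_zero (S : Finset α) :
    deriv (pairwiseExpLoss D f y S) 0 =
      ∑ p ∈ orderedPairs D y, offsetCoeff S p * exp (f p.2 - f p.1) :=
  deriv_sum_exp_zero _ _ _

theorem deriv_deriv_pairwiseExpLoss_zero (S : Finset α) :
    deriv (deriv (pairwiseExpLoss D f y S)) 0 =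
      ∑ p ∈ orderedPairs D y, offsetCoeff S p ^ 2 * exp (f p.2 - f p.1) :=
  deriv_deriv_sum_exp_zero _ _ _

theorem deriv_pairwiseExpLoss_zero_eq_sum_singleton (S : Finset α) :
    deriv (pairwiseExpLoss D f y S) 0 = ∑ d ∈ S, deriv (pairwiseExpLoss D f y {d}) 0 := by
  simp only [deriv_pairwiseExpLoss_zero]
  rw [sum_comm]
  refine sum_congr rfl fun p _ => ?_
  rw [← sum_mul, sum_offsetCoeff_singleton]

theorem deriv_deriv_pairwiseExpLoss_zero_eq_sum_singleton (S : Finset α)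
    (hS : ∀ d₁ ∈ D, ∀ d₂ ∈ D, y d₁ > y d₂ → ¬(d₁ ∈ S ∧ d₂ ∈ S)) :
    deriv (deriv (pairwiseExpLoss D f y S)) 0 =
      ∑ d ∈ S, deriv (deriv (pairwiseExpLoss D f y {d})) 0 := by
  simp only [deriv_deriv_pairwiseExpLoss_zero]
  rw [sum_comm]
  refine sum_congr rfl fun p hp => ?_
  obtain ⟨⟨h₁, h₂⟩, hlt⟩ : (p.1 ∈ D ∧ p.2 ∈ D) ∧ y p.2 < y p.1 := by
    simpa [orderedPairs] using hp
  rw [← sum_mul, sum_sq_offsetCoeff_singleton (fun h => hlt.ne (by rw [h]))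
    (hS _ h₁ _ h₂ hlt)]

end PairwiseExpLoss

open Real in
theorem pairwise_exp_loss_derivative_additive_of_separating_general
    {α : Type*} [DecidableEq α] (D Dl Dr : Finset α)
    (f : α → ℝ) (y : α → ℤ)
    (Lo : Finset α → ℝ → ℝ)
    (hLo : ∀ (S : Finset α) (o : ℝ), Lo S o =
      ∑ d₁ ∈ D, ∑ d₂ ∈ D, if y d₁ > y d₂ then
        exp ((f d₂ + o * (if d₂ ∈ S then 1 else 0))
          - (f d₁ + o * (if d₁ ∈ S then 1 else 0))) else 0)
    (hsep : ∀ d₁ ∈ D, ∀ d₂ ∈ D, y d₁ > y d₂ →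
      ¬(d₁ ∈ Dl ∧ d₂ ∈ Dl) ∧ ¬(d₁ ∈ Dr ∧ d₂ ∈ Dr)) :
    (deriv (Lo Dl) 0 = ∑ d ∈ Dl, deriv (Lo {d}) 0) ∧
    (deriv (deriv (Lo Dl)) 0 = ∑ d ∈ Dl, deriv (deriv (Lo {d})) 0) ∧
    (deriv (Lo Dr) 0 = ∑ d ∈ Dr, deriv (Lo {d}) 0) ∧
    (deriv (deriv (Lo Dr)) 0 = ∑ d ∈ Dr, deriv (deriv (Lo {d})) 0) := by
  obtain rfl : Lo = pairwiseExpLoss D f y :=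
    funext₂ fun S o => (hLo S o).trans (sum_sum_ite_exp_eq_pairwiseExpLoss D f y S o)
  exact ⟨deriv_pairwiseExpLoss_zero_eq_sum_singleton D f y Dl,
    deriv_deriv_pairwiseExpLoss_zero_eq_sum_singleton D f y Dl
      fun d₁ h₁ d₂ h₂ h => (hsep d₁ h₁ d₂ h₂ h).1,
    deriv_pairwiseExpLoss_zero_eq_sum_singleton D f y Dr,
    deriv_deriv_pairwiseExpLoss_zero_eq_sum_singleton D f y Dr
      fun d₁ h₁ d₂ h₂ h => (hsep d₁ h₁ d₂ h₂ h).2⟩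

open Real in
/-- If a partition separates every correctly ordered pair of the pairwise
exponential loss, then the loss is derivative additive on that partition:
for each leaf, the first and second derivatives in the leaf's output at `0`
equal the sums of the per-document derivatives (per-document derivatives are
those of the loss in an offset added to that document's score alone). -/
theorem pairwise_exp_loss_derivative_additive_of_separating
    {α : Type*} [DecidableEq α] (D Dl Dr : Finset α)
    (hDl : Dl.Nonempty) (hDr : Dr.Nonempty) (hdisj : Disjoint Dl Dr)
    (hunion : D = Dl ∪ Dr) (f : α → ℝ) (y : α → ℤ)
    (Lo : Finset α → ℝ → ℝ)
    (hLo : ∀ (S : Finset α) (o : ℝ), Lo S o =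
      ∑ d₁ ∈ D, ∑ d₂ ∈ D, if y d₁ > y d₂ then
        exp ((f d₂ + o * (if d₂ ∈ S then 1 else 0))
          - (f d₁ + o * (if d₁ ∈ S then 1 else 0))) else 0)
    (hsep : ∀ d₁ ∈ D, ∀ d₂ ∈ D, y d₁ > y d₂ →
      ¬(d₁ ∈ Dl ∧ d₂ ∈ Dl) ∧ ¬(d₁ ∈ Dr ∧ d₂ ∈ Dr)) :
    (deriv (Lo Dl) 0 = ∑ d ∈ Dl, deriv (Lo {d}) 0) ∧
    (deriv (deriv (Lo Dl)) 0 = ∑ d ∈ Dl, deriv (deriv (Lo {d})) 0) ∧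
    (deriv (Lo Dr) 0 = ∑ d ∈ Dr, deriv (Lo {d}) 0) ∧
    (deriv (deriv (Lo Dr)) 0 = ∑ d ∈ Dr, deriv (deriv (Lo {d})) 0) :=
  pairwise_exp_loss_derivative_additive_of_separating_general D Dl Dr f y Lo hLo hsep
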